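/- Let A ∈ ℝ^{n×d} have full column rank and satisfy (1/κ)I ⪯ AᵀA ⪯ κI and (1/κ)(d/n) ≤ ‖Aᵢ‖₂² ≤ κ(d/n) for every row i, for some κ ≥ 1. Let w ∈ ℝⁿ be strictly positive weights satisfying the ℓ1 Lewis-weight fixed-point equation wᵢ² = Aᵢ (AᵀW⁻¹A)⁻¹ Aᵢᵀ for all i, where W = diag(w). Then for every i, (1/κ²)(d/n) ≤ wᵢ ≤ κ²(d/n). -/

import Mathlib

/-!
Write `M = AᵀW⁻¹A`. The spectral bounds on `AᵀA` and the extreme weights give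
`(κ w_max)⁻¹ I ⪯ M ⪯ κ w_min⁻¹ I`, so Cauchy–Schwarz (for the dot product and for the form of `M`)
turns the fixed point `wᵢ² = aᵢᵀM⁻¹aᵢ` into `wᵢ² ≤ κ w_max ‖aᵢ‖²` and `‖aᵢ‖² ≤ κ w_min⁻¹ wᵢ²`.
At the largest and at the smallest weight, the row-norm bounds then give `w_max ≤ κ² d/n` and
`w_min ≥ κ⁻² d/n`.
-/

open Matrix Finset

/-- The ℓ2 norm of a vector in ℝ^m. -/
noncomputable def l2norm {m : ℕ} (v : Fin m → ℝ) : ℝ := Real.sqrt (∑ i, (v i) ^ 2)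

/-- The Loewner order: `M ⪯ N` iff `N − M` is positive semidefinite. -/
def loewnerLE {d : ℕ} (M N : Matrix (Fin d) (Fin d) ℝ) : Prop := (N - M).PosSemidef

namespace Matrix

variable {ι m : Type*} [Fintype ι] [Fintype m]

theorem dotProduct_self_nonneg {R : Type*} [Ring R] [LinearOrder R] [IsStrictOrderedRing R]
    (v : ι → R) : 0 ≤ v ⬝ᵥ v :=
  sum_nonneg fun i _ => mul_self_nonneg (v i)

theorem PosSemidef.dotProduct_mulVec_sq_le {M : Matrix ι ι ℝ} (hM : M.PosSemidef)
    (x y : ι → ℝ) : (x ⬝ᵥ M *ᵥ y) ^ 2 ≤ (x ⬝ᵥ M *ᵥ x) * (y ⬝ᵥ M *ᵥ y) := by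
  let := M.toSeminormedAddCommGroup hM
  let := M.toInnerProductSpace hM
  have inner_eq : ∀ u v : ι → ℝ, inner ℝ u v = u ⬝ᵥ M *ᵥ v := fun u v => dotProduct_comm _ _
  simpa only [inner_eq, sq] using real_inner_mul_inner_self_le x y

theorem dotProduct_sq_le [DecidableEq ι] (x y : ι → ℝ) : (x ⬝ᵥ y) ^ 2 ≤ (x ⬝ᵥ x) * (y ⬝ᵥ y) := by
  simpa only [one_mulVec] using PosSemidef.one.dotProduct_mulVec_sq_le x y

theorem isUnit_of_le_dotProduct_mulVec [DecidableEq ι] {M : Matrix ι ι ℝ} {c : ℝ} (hc : 0 < c)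
    (hM : ∀ x, c * (x ⬝ᵥ x) ≤ x ⬝ᵥ M *ᵥ x) : IsUnit M := by
  rw [isUnit_iff_isUnit_det, isUnit_iff_ne_zero, Ne, ← exists_mulVec_eq_zero_iff]
  rintro ⟨x, hx0, hx⟩
  have hx' := hM x
  rw [hx, dotProduct_zero] at hx'
  exact hx0 (dotProduct_self_eq_zero.mp (le_antisymm (nonpos_of_mul_nonpos_right hx' hc)
    (dotProduct_self_nonneg x)))

theorem dotProduct_inv_mulVec_le [DecidableEq ι] {M : Matrix ι ι ℝ} {c : ℝ} (hc : 0 < c)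
    (hM : ∀ x, c * (x ⬝ᵥ x) ≤ x ⬝ᵥ M *ᵥ x) (a : ι → ℝ) :
    a ⬝ᵥ M⁻¹ *ᵥ a ≤ c⁻¹ * (a ⬝ᵥ a) := by
  set x := M⁻¹ *ᵥ a
  have hMx : M *ᵥ x = a := by
    rw [mulVec_mulVec, mul_nonsing_inv _ ((isUnit_of_le_dotProduct_mulVec hc hM).map detMonoidHom),
      one_mulVec]
  have hcx : c * (x ⬝ᵥ x) ≤ a ⬝ᵥ x := by
    simpa only [hMx, dotProduct_comm x a] using hM x
  have hq : 0 ≤ a ⬝ᵥ x := (mul_nonneg hc.le (dotProduct_self_nonneg x)).trans hcx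
  have hq2 : c * (a ⬝ᵥ x) ^ 2 ≤ (a ⬝ᵥ a) * (a ⬝ᵥ x) := calc
    c * (a ⬝ᵥ x) ^ 2 ≤ c * ((a ⬝ᵥ a) * (x ⬝ᵥ x)) :=
      mul_le_mul_of_nonneg_left (dotProduct_sq_le a x) hc.le
    _ = (a ⬝ᵥ a) * (c * (x ⬝ᵥ x)) := by ring
    _ ≤ (a ⬝ᵥ a) * (a ⬝ᵥ x) := mul_le_mul_of_nonneg_left hcx (dotProduct_self_nonneg a)
  rw [le_inv_mul_iff₀ hc]
  rcases hq.eq_or_lt with hq0 | hq0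
  · rw [← hq0, mul_zero]
    exact dotProduct_self_nonneg a
  · nlinarith

theorem PosSemidef.dotProduct_le_mul_dotProduct_inv_mulVec [DecidableEq ι] {M : Matrix ι ι ℝ}
    (hM : M.PosSemidef) (hMu : IsUnit M) {C : ℝ} (hC : ∀ x, x ⬝ᵥ M *ᵥ x ≤ C * (x ⬝ᵥ x))
    (a : ι → ℝ) : a ⬝ᵥ a ≤ C * (a ⬝ᵥ M⁻¹ *ᵥ a) := by
  rcases eq_or_ne a 0 with rfl | ha
  · simp
  have ha : 0 < a ⬝ᵥ a := (dotProduct_self_nonneg a).lt_of_ne' (mt dotProduct_self_eq_zero.mp ha)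
  set x := M⁻¹ *ᵥ a
  have hMx : M *ᵥ x = a := by
    rw [mulVec_mulVec, mul_nonsing_inv _ ((isUnit_iff_isUnit_det M).mp hMu), one_mulVec]
  have hq : 0 ≤ a ⬝ᵥ x := by
    simpa only [hMx, star_trivial, dotProduct_comm x a] using hM.dotProduct_mulVec_nonneg x
  have hcs : (a ⬝ᵥ a) ^ 2 ≤ (a ⬝ᵥ M *ᵥ a) * (a ⬝ᵥ x) := by
    simpa only [hMx, dotProduct_comm x a] using hM.dotProduct_mulVec_sq_le a x
  nlinarith [mul_le_mul_of_nonneg_right (hC a) hq]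

theorem dotProduct_transpose_mul_mul_mulVec {R : Type*} [CommSemiring R] (A : Matrix m ι R)
    (B : Matrix m m R) (x : ι → R) : x ⬝ᵥ (Aᵀ * B * A) *ᵥ x = (A *ᵥ x) ⬝ᵥ B *ᵥ (A *ᵥ x) := by
  rw [← mulVec_mulVec, ← mulVec_mulVec, dotProduct_mulVec, vecMul_transpose]

theorem dotProduct_transpose_mul_mulVec {R : Type*} [CommSemiring R] (A : Matrix m ι R)
    (x : ι → R) : x ⬝ᵥ (Aᵀ * A) *ᵥ x = (A *ᵥ x) ⬝ᵥ (A *ᵥ x) := by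
  rw [← mulVec_mulVec, dotProduct_mulVec, vecMul_transpose]

variable [DecidableEq m]

theorem inv_diagonal_of_ne_zero {K : Type*} [Field K] {v : m → K} (hv : ∀ k, v k ≠ 0) :
    (diagonal v)⁻¹ = diagonal v⁻¹ :=
  inv_eq_right_inv (by rw [diagonal_mul_diagonal, ← diagonal_one]; simp [hv])

theorem mul_dotProduct_self_le_dotProduct_diagonal_mulVec {v : m → ℝ} {c : ℝ}
    (hv : ∀ k, c ≤ v k) (y : m → ℝ) : c * (y ⬝ᵥ y) ≤ y ⬝ᵥ diagonal v *ᵥ y := by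
  simp only [mulVec_diagonal, dotProduct, mul_sum]
  exact sum_le_sum fun k _ => by nlinarith [mul_self_nonneg (y k), hv k]

theorem dotProduct_diagonal_mulVec_le_mul_dotProduct_self {v : m → ℝ} {c : ℝ}
    (hv : ∀ k, v k ≤ c) (y : m → ℝ) : y ⬝ᵥ diagonal v *ᵥ y ≤ c * (y ⬝ᵥ y) := by
  simp only [mulVec_diagonal, dotProduct, mul_sum]
  exact sum_le_sum fun k _ => by nlinarith [mul_self_nonneg (y k), hv k]

end Matrix

section LewisWeights

variable {ι m : Type*} [Fintype ι] [Fintype m] [DecidableEq ι] [DecidableEq m]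
  {A : Matrix m ι ℝ} {w : m → ℝ}

theorem mul_max_lewisWeight_le {b : ℝ} (hb : 0 < b)
    (hA : ∀ x, b * (x ⬝ᵥ x) ≤ x ⬝ᵥ (Aᵀ * A) *ᵥ x) (hw : ∀ k, 0 < w k)
    (hlewis : ∀ k, w k ^ 2 = A k ⬝ᵥ (Aᵀ * (diagonal w)⁻¹ * A)⁻¹ *ᵥ A k)
    {j : m} (hj : ∀ k, w k ≤ w j) : b * w j ≤ A j ⬝ᵥ A j := by
  rw [inv_diagonal_of_ne_zero fun k => (hw k).ne'] at hlewis
  have hM : ∀ x, (w j)⁻¹ * b * (x ⬝ᵥ x) ≤ x ⬝ᵥ (Aᵀ * diagonal w⁻¹ * A) *ᵥ x := fun x => calc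
    (w j)⁻¹ * b * (x ⬝ᵥ x) ≤ (w j)⁻¹ * ((A *ᵥ x) ⬝ᵥ (A *ᵥ x)) := by
      rw [mul_assoc, ← dotProduct_transpose_mul_mulVec]
      exact mul_le_mul_of_nonneg_left (hA x) (inv_pos.mpr (hw j)).le
    _ ≤ x ⬝ᵥ (Aᵀ * diagonal w⁻¹ * A) *ᵥ x := by
      rw [dotProduct_transpose_mul_mul_mulVec]
      exact mul_dotProduct_self_le_dotProduct_diagonal_mulVec
        (fun k => inv_anti₀ (hw k) (hj k)) _
  have hwj := hw j
  have h := dotProduct_inv_mulVec_le (by positivity) hM (A j)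
  rw [← hlewis, mul_inv, inv_inv, sq, mul_assoc] at h
  exact (le_inv_mul_iff₀ hb).mp (le_of_mul_le_mul_left h hwj)

theorem le_mul_min_lewisWeight {B : ℝ} (hA : ∀ x, x ⬝ᵥ (Aᵀ * A) *ᵥ x ≤ B * (x ⬝ᵥ x))
    (hw : ∀ k, 0 < w k)
    (hlewis : ∀ k, w k ^ 2 = A k ⬝ᵥ (Aᵀ * (diagonal w)⁻¹ * A)⁻¹ *ᵥ A k)
    {j : m} (hj : ∀ k, w j ≤ w k) : A j ⬝ᵥ A j ≤ B * w j := by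
  -- A singular `M` would have the junk inverse `0`, forcing `w j = 0`.
  have hMu : IsUnit (Aᵀ * (diagonal w)⁻¹ * A) := by
    by_contra hM
    have h := hlewis j
    rw [nonsing_inv_apply_not_isUnit _ (mt (isUnit_iff_isUnit_det _).mpr hM), zero_mulVec,
      dotProduct_zero] at h
    exact (hw j).ne' (pow_eq_zero_iff two_ne_zero |>.mp h)
  rw [inv_diagonal_of_ne_zero fun k => (hw k).ne'] at hlewis hMu
  have hMpsd : (Aᵀ * diagonal w⁻¹ * A).PosSemidef := by
    have hD : (diagonal w⁻¹).PosSemidef :=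
      PosSemidef.diagonal fun k => (inv_pos.mpr (hw k)).le
    simpa only [conjTranspose_eq_transpose_of_trivial] using hD.conjTranspose_mul_mul_same A
  have hM : ∀ x, x ⬝ᵥ (Aᵀ * diagonal w⁻¹ * A) *ᵥ x ≤ (w j)⁻¹ * B * (x ⬝ᵥ x) := fun x => calc
    x ⬝ᵥ (Aᵀ * diagonal w⁻¹ * A) *ᵥ x ≤ (w j)⁻¹ * ((A *ᵥ x) ⬝ᵥ (A *ᵥ x)) := by
      rw [dotProduct_transpose_mul_mul_mulVec]
      exact dotProduct_diagonal_mulVec_le_mul_dotProduct_self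
        (fun k => inv_anti₀ (hw j) (hj k)) _
    _ ≤ (w j)⁻¹ * B * (x ⬝ᵥ x) := by
      rw [mul_assoc, ← dotProduct_transpose_mul_mulVec]
      exact mul_le_mul_of_nonneg_left (hA x) (inv_pos.mpr (hw j)).le
  have h := hMpsd.dotProduct_le_mul_dotProduct_inv_mulVec hMu hM (A j)
  rwa [← hlewis, mul_assoc, mul_left_comm, sq, inv_mul_cancel_left₀ (hw j).ne'] at h

end LewisWeights

theorem loewnerLE.dotProduct_mulVec_le {d : ℕ} {M N : Matrix (Fin d) (Fin d) ℝ}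
    (h : loewnerLE M N) (x : Fin d → ℝ) : x ⬝ᵥ M *ᵥ x ≤ x ⬝ᵥ N *ᵥ x := by
  have hx := h.dotProduct_mulVec_nonneg x
  rwa [star_trivial, sub_mulVec, dotProduct_sub, sub_nonneg] at hx

theorem l2norm_sq {m : ℕ} (v : Fin m → ℝ) : l2norm v ^ 2 = v ⬝ᵥ v := by
  rw [l2norm, Real.sq_sqrt (sum_nonneg fun i _ => sq_nonneg (v i))]
  simp only [dotProduct, sq]

theorem stmt12_general {n d : ℕ} (A : Matrix (Fin n) (Fin d) ℝ)
    (κ : ℝ) (hκ : 1 ≤ κ)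
    (hlo : loewnerLE ((1 / κ) • (1 : Matrix (Fin d) (Fin d) ℝ)) (Aᵀ * A))
    (hhi : loewnerLE (Aᵀ * A) (κ • (1 : Matrix (Fin d) (Fin d) ℝ)))
    (hrow : ∀ i, (1 / κ) * ((d : ℝ) / n) ≤ (l2norm (A i)) ^ 2 ∧
                 (l2norm (A i)) ^ 2 ≤ κ * ((d : ℝ) / n))
    (w : Fin n → ℝ) (hw : ∀ i, 0 < w i)
    (hlewis : ∀ i, (w i) ^ 2 =
      A i ⬝ᵥ ((Aᵀ * (Matrix.diagonal w)⁻¹ * A)⁻¹).mulVec (A i)) :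
    ∀ i, (1 / κ ^ 2) * ((d : ℝ) / n) ≤ w i ∧ w i ≤ κ ^ 2 * ((d : ℝ) / n) := by
  intro i
  have hκ0 : 0 < κ := by linarith
  have hAlo (x : Fin d → ℝ) : 1 / κ * (x ⬝ᵥ x) ≤ x ⬝ᵥ (Aᵀ * A) *ᵥ x := by
    simpa only [one_div, smul_mulVec, one_mulVec, dotProduct_smul, smul_eq_mul] using
      hlo.dotProduct_mulVec_le x
  have hAhi (x : Fin d → ℝ) : x ⬝ᵥ (Aᵀ * A) *ᵥ x ≤ κ * (x ⬝ᵥ x) := by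
    simpa only [smul_mulVec, one_mulVec, dotProduct_smul, smul_eq_mul] using
      hhi.dotProduct_mulVec_le x
  obtain ⟨jmax, -, hmax⟩ := exists_max_image univ w ⟨i, mem_univ i⟩
  obtain ⟨jmin, -, hmin⟩ := exists_min_image univ w ⟨i, mem_univ i⟩
  have hwmax := mul_max_lewisWeight_le (by positivity) hAlo hw hlewis fun k => hmax k (mem_univ k)
  have hwmin := le_mul_min_lewisWeight hAhi hw hlewis fun k => hmin k (mem_univ k)
  rw [← l2norm_sq] at hwmax hwmin
  constructor
  · calc 1 / κ ^ 2 * (d / n) = 1 / κ * (1 / κ * (d / n)) := by ring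
      _ ≤ 1 / κ * l2norm (A jmin) ^ 2 := by gcongr; exact (hrow jmin).1
      _ ≤ w jmin := by rw [one_div, inv_mul_le_iff₀ hκ0]; exact hwmin
      _ ≤ w i := hmin i (mem_univ i)
  · calc w i ≤ w jmax := hmax i (mem_univ i)
      _ ≤ κ * l2norm (A jmax) ^ 2 := by rwa [one_div, inv_mul_le_iff₀ hκ0] at hwmax
      _ ≤ κ * (κ * (d / n)) := by gcongr; exact (hrow jmax).2
      _ = κ ^ 2 * (d / n) := by ring

/-- Almost-uniform leverage scores imply almost-uniform ℓ1 Lewis weights: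
if `(1/κ)I ⪯ AᵀA ⪯ κI` and `(1/κ)(d/n) ≤ ‖Aᵢ‖₂² ≤ κ(d/n)` for every row, and `w`
are strictly positive weights satisfying the Lewis-weight fixed point
`wᵢ² = Aᵢ(AᵀW⁻¹A)⁻¹Aᵢᵀ`, then `(1/κ²)(d/n) ≤ wᵢ ≤ κ²(d/n)` for all `i`. -/
theorem stmt12 {n d : ℕ} (A : Matrix (Fin n) (Fin d) ℝ)
    (hA : IsUnit (Aᵀ * A))
    (κ : ℝ) (hκ : 1 ≤ κ)
    (hlo : loewnerLE ((1 / κ) • (1 : Matrix (Fin d) (Fin d) ℝ)) (Aᵀ * A))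
    (hhi : loewnerLE (Aᵀ * A) (κ • (1 : Matrix (Fin d) (Fin d) ℝ)))
    (hrow : ∀ i, (1 / κ) * ((d : ℝ) / n) ≤ (l2norm (A i)) ^ 2 ∧
                 (l2norm (A i)) ^ 2 ≤ κ * ((d : ℝ) / n))
    (w : Fin n → ℝ) (hw : ∀ i, 0 < w i)
    (hlewis : ∀ i, (w i) ^ 2 =
      A i ⬝ᵥ ((Aᵀ * (Matrix.diagonal w)⁻¹ * A)⁻¹).mulVec (A i)) :
    ∀ i, (1 / κ ^ 2) * ((d : ℝ) / n) ≤ w i ∧ w i ≤ κ ^ 2 * ((d : ℝ) / n) :=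
  stmt12_general A κ hκ hlo hhi hrow w hw hlewis
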